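/- Let g > 0 and suppose β ≥ β_1 = ℏλ − (ℏ²/(4m))·(π/L)². Then the only GP solution on [0,L] with parameter β that is continuously differentiable on [0,L] is the identically zero function. (No nontrivial quantum states exist before the first quantum critical point in the repulsive case; bifurcation occurs only to the left of β_1.) -/

import Mathlib

open Set MeasureTheory intervalIntegral Filter Topology

/-- `φ` is a GP solution on `[a,b]` with parameter `β`:
`φ` is continuous on `[a,b]`, twice continuously differentiable on `(a,b)`,
satisfies `-(ℏ²/(4m))·φ'' + (β - ℏλ)·φ + g·φ³ = 0` on `(a,b)`,
and `φ a = φ b = 0`. -/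
def IsGPSolution (ℏ m lam g a b β : ℝ) (φ : ℝ → ℝ) : Prop :=
  ContinuousOn φ (Set.Icc a b) ∧
  ContDiffOn ℝ 2 φ (Set.Ioo a b) ∧
  (∀ x ∈ Set.Ioo a b,
    -(ℏ ^ 2 / (4 * m)) * deriv (deriv φ) x + (β - ℏ * lam) * φ x + g * (φ x) ^ 3 = 0) ∧
  φ a = 0 ∧ φ b = 0

/-- The quantum critical points `β_k = ℏλ - (ℏ²/(4m))·(kπ/L)²`. -/
noncomputable def betaCrit (ℏ m lam L : ℝ) (k : ℕ) : ℝ :=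
  ℏ * lam - (ℏ ^ 2 / (4 * m)) * ((k : ℝ) * Real.pi / L) ^ 2

/-!
Since the equation is odd in `φ`, it suffices to show `φ ≤ 0`. If `φ x₀ > 0`, let `(α, γ)` be
the nodal interval of `φ` around `x₀` and compare `φ` with `s x = sin (π x / L)`, which is
nonnegative on `[0, L]` and solves `s'' = -(π / L)² s`. On `(α, γ)` the equation together with
`β ≥ β₁` and `g > 0` gives `φ'' + (π / L)² φ > 0`, so the Wronskian `φ' s - φ s'` is strictly
increasing there. But it is `≥ 0` at `α` and `≤ 0` at `γ`, because `φ` vanishes at both ends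
and is positive in between.
-/

lemma exists_zero_left_of_pos {f : ℝ → ℝ} {a x₀ : ℝ} (hax : a ≤ x₀)
    (hf : ContinuousOn f (Icc a x₀)) (ha : f a = 0) (hpos : 0 < f x₀) :
    ∃ α ∈ Ico a x₀, f α = 0 ∧ ∀ x ∈ Ioc α x₀, 0 < f x := by
  set S := Icc a x₀ ∩ f ⁻¹' {0}
  have hS : IsClosed S := hf.preimage_isClosed_of_isClosed isClosed_Icc isClosed_singleton
  have hSbdd : BddAbove S := bddAbove_Icc.mono inter_subset_left
  have hαS : sSup S ∈ S := hS.csSup_mem ⟨a, ⟨le_rfl, hax⟩, ha⟩ hSbdd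
  have hα : f (sSup S) = 0 := hαS.2
  refine ⟨sSup S, ⟨hαS.1.1, hαS.1.2.lt_of_ne fun h => hpos.ne' (h ▸ hα)⟩, hα, fun x hx => ?_⟩
  by_contra! hx0
  have hαx : Icc x x₀ ⊆ Icc a x₀ := Icc_subset_Icc_left (hαS.1.1.trans hx.1.le)
  obtain ⟨z, hz, hz0⟩ := intermediate_value_Icc hx.2 (hf.mono hαx) ⟨hx0, hpos.le⟩
  have : z ≤ sSup S := le_csSup hSbdd ⟨hαx hz, hz0⟩
  linarith [hx.1, hz.1]

lemma exists_zero_right_of_pos {f : ℝ → ℝ} {x₀ b : ℝ} (hxb : x₀ ≤ b)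
    (hf : ContinuousOn f (Icc x₀ b)) (hb : f b = 0) (hpos : 0 < f x₀) :
    ∃ γ ∈ Ioc x₀ b, f γ = 0 ∧ ∀ x ∈ Ico x₀ γ, 0 < f x := by
  have hf' : ContinuousOn (fun x => f (-x)) (Icc (-b) (-x₀)) :=
    hf.comp continuous_neg.continuousOn fun x hx => ⟨le_neg.2 hx.2, neg_le.1 hx.1⟩
  obtain ⟨α, hα, hα0, hpos'⟩ :=
    exists_zero_left_of_pos (neg_le_neg hxb) hf' (by simpa using hb) (by simpa using hpos)
  refine ⟨-α, ⟨lt_neg.2 hα.2, neg_le.1 hα.1⟩, hα0, fun x hx => ?_⟩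
  simpa using hpos' (-x) ⟨lt_neg.1 hx.2, neg_le_neg hx.1⟩

lemma exists_nodal_interval {f : ℝ → ℝ} {a b x₀ : ℝ} (hf : ContinuousOn f (Icc a b))
    (ha : f a = 0) (hb : f b = 0) (hx₀ : x₀ ∈ Icc a b) (hpos : 0 < f x₀) :
    ∃ α γ, a ≤ α ∧ α < γ ∧ γ ≤ b ∧ f α = 0 ∧ f γ = 0 ∧ ∀ x ∈ Ioo α γ, 0 < f x := by
  obtain ⟨α, hα, hα0, hposα⟩ :=
    exists_zero_left_of_pos hx₀.1 (hf.mono (Icc_subset_Icc_right hx₀.2)) ha hpos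
  obtain ⟨γ, hγ, hγ0, hposγ⟩ :=
    exists_zero_right_of_pos hx₀.2 (hf.mono (Icc_subset_Icc_left hx₀.1)) hb hpos
  refine ⟨α, γ, hα.1, hα.2.trans hγ.1, hγ.2, hα0, hγ0, fun x hx => ?_⟩
  rcases le_or_gt x x₀ with h | h
  · exact hposα x ⟨hx.1, h⟩
  · exact hposγ x ⟨h.le, hx.2⟩

lemma IsLocalMinOn.hasDerivWithinAt_mul_sub_nonneg {f : ℝ → ℝ} {s : Set ℝ} {x y f' : ℝ}
    (hmin : IsLocalMinOn f s x) (hf : HasDerivWithinAt f f' s x) (hxy : segment ℝ x y ⊆ s) :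
    0 ≤ f' * (y - x) := by
  have := hmin.hasFDerivWithinAt_nonneg hf.hasFDerivWithinAt
    (sub_mem_posTangentConeAt_of_segment_subset hxy)
  simpa [mul_comm] using this

theorem exists_wronskian_deriv_nonpos {u u' u'' v v' v'' : ℝ → ℝ} {a b : ℝ} (hab : a < b)
    (hu : ∀ x ∈ Icc a b, HasDerivWithinAt u (u' x) (Icc a b) x)
    (hu' : ∀ x ∈ Ioo a b, HasDerivAt u' (u'' x) x) (hu'c : ContinuousOn u' (Icc a b))
    (hv : ∀ x ∈ Icc a b, HasDerivWithinAt v (v' x) (Icc a b) x)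
    (hv' : ∀ x ∈ Ioo a b, HasDerivAt v' (v'' x) x) (hv'c : ContinuousOn v' (Icc a b))
    (hua : u a = 0) (hub : u b = 0) (hu0 : ∀ x ∈ Icc a b, 0 ≤ u x)
    (hva : 0 ≤ v a) (hvb : 0 ≤ v b) :
    ∃ x ∈ Ioo a b, u'' x * v x - u x * v'' x ≤ 0 := by
  by_contra! hpos
  set W := fun x => u' x * v x - u x * v' x
  have hWc : ContinuousOn W (Icc a b) :=
    (hu'c.mul fun x hx => (hv x hx).continuousWithinAt).sub
      (ContinuousOn.mul (fun x hx => (hu x hx).continuousWithinAt) hv'c)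
  have hW : ∀ x ∈ Ioo a b, HasDerivAt W (u'' x * v x - u x * v'' x) x := by
    intro x hx
    have hIcc : Icc a b ∈ 𝓝 x := Icc_mem_nhds hx.1 hx.2
    exact (((hu' x hx).mul ((hv x (Ioo_subset_Icc_self hx)).hasDerivAt hIcc)).sub
      (((hu x (Ioo_subset_Icc_self hx)).hasDerivAt hIcc).mul (hv' x hx))).congr_deriv (by ring)
  have hmono : StrictMonoOn W (Icc a b) :=
    strictMonoOn_of_deriv_pos (convex_Icc a b) hWc fun x hx => by
      rw [interior_Icc] at hx
      rw [(hW x hx).deriv]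
      exact hpos x hx
  have hmin : ∀ x, u x = 0 → IsLocalMinOn u (Icc a b) x := fun x hx =>
    IsMinOn.localize fun y hy => hx ▸ hu0 y hy
  have hu'a : 0 ≤ u' a := by
    have := (hmin a hua).hasDerivWithinAt_mul_sub_nonneg
      (hu a (left_mem_Icc.2 hab.le)) (segment_eq_Icc hab.le).subset
    exact nonneg_of_mul_nonneg_left this (sub_pos.2 hab)
  have hu'b : u' b ≤ 0 := by
    have := (hmin b hub).hasDerivWithinAt_mul_sub_nonneg
      (hu b (right_mem_Icc.2 hab.le)) (segment_symm ℝ b a ▸ (segment_eq_Icc hab.le).subset)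
    exact nonpos_of_mul_nonneg_left this (sub_neg.2 hab)
  have := hmono (left_mem_Icc.2 hab.le) (right_mem_Icc.2 hab.le) hab
  simp only [W, hua, hub, zero_mul, sub_zero] at this
  linarith [mul_nonneg hu'a hva, mul_nonpos_of_nonpos_of_nonneg hu'b hvb]

lemma hasDerivAt_derivWithin_Icc {f : ℝ → ℝ} {a b x : ℝ} (hf : ContDiffOn ℝ 2 f (Ioo a b))
    (hx : x ∈ Ioo a b) : HasDerivAt (derivWithin f (Icc a b)) (deriv (deriv f) x) x := by
  have hf' : DifferentiableOn ℝ (deriv f) (Ioo a b) :=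
    (hf.deriv_of_isOpen isOpen_Ioo (by norm_num)).differentiableOn one_ne_zero
  refine ((hf' x hx).differentiableAt (isOpen_Ioo.mem_nhds hx)).hasDerivAt.congr_of_eventuallyEq ?_
  filter_upwards [isOpen_Ioo.mem_nhds hx] with y hy using
    derivWithin_of_mem_nhds (Icc_mem_nhds hy.1 hy.2)

lemma hasDerivAt_sin_mul (k x : ℝ) :
    HasDerivAt (fun x => Real.sin (k * x)) (k * Real.cos (k * x)) x := by
  simpa [mul_comm] using ((hasDerivAt_id x).const_mul k).sin

lemma hasDerivAt_mul_cos_mul (k x : ℝ) :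
    HasDerivAt (fun x => k * Real.cos (k * x)) (-(k ^ 2 * Real.sin (k * x))) x :=
  ((((hasDerivAt_id x).const_mul k).cos).const_mul k).congr_deriv (by simp only [id]; ring)

lemma sin_pi_div_mul_nonneg {L x : ℝ} (hL : 0 < L) (hx : x ∈ Icc 0 L) :
    0 ≤ Real.sin (Real.pi / L * x) := by
  apply Real.sin_nonneg_of_nonneg_of_le_pi (mul_nonneg (by positivity) hx.1)
  rw [div_mul_eq_mul_div, div_le_iff₀ hL]
  nlinarith [Real.pi_pos, hx.2]

lemma sin_pi_div_mul_pos {L x : ℝ} (hx : x ∈ Ioo 0 L) : 0 < Real.sin (Real.pi / L * x) := by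
  have hL : 0 < L := hx.1.trans hx.2
  apply Real.sin_pos_of_pos_of_lt_pi (mul_pos (by positivity) hx.1)
  rw [div_mul_eq_mul_div, div_lt_iff₀ hL]
  nlinarith [Real.pi_pos, hx.2]

lemma IsGPSolution.neg {ℏ m lam g a b β : ℝ} {φ : ℝ → ℝ}
    (h : IsGPSolution ℏ m lam g a b β φ) : IsGPSolution ℏ m lam g a b β (-φ) := by
  obtain ⟨hc, hd, hode, ha, hb⟩ := h
  refine ⟨hc.neg, hd.neg, fun x hx => ?_, by simp [ha], by simp [hb]⟩
  have h2 : deriv (deriv (-φ)) x = -deriv (deriv φ) x := by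
    rw [deriv.neg', ← deriv.neg]
    rfl
  rw [h2, Pi.neg_apply]
  linear_combination -hode x hx

lemma IsGPSolution.deriv_deriv_add_pos {ℏ m lam g a b β L : ℝ} {φ : ℝ → ℝ}
    (hsol : IsGPSolution ℏ m lam g a b β φ) (hℏ : ℏ ≠ 0) (hm : 0 < m) (hg : 0 < g)
    (hβ : betaCrit ℏ m lam L 1 ≤ β) {x : ℝ} (hx : x ∈ Ioo a b) (hφ : 0 < φ x) :
    0 < deriv (deriv φ) x + (Real.pi / L) ^ 2 * φ x := by
  have hc : 0 < ℏ ^ 2 / (4 * m) := by positivity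
  have hβ' : 0 ≤ β - ℏ * lam + ℏ ^ 2 / (4 * m) * (Real.pi / L) ^ 2 := by
    unfold betaCrit at hβ
    simp only [Nat.cast_one, one_mul] at hβ
    linarith
  have hode := hsol.2.2.1 x hx
  have key : ℏ ^ 2 / (4 * m) * (deriv (deriv φ) x + (Real.pi / L) ^ 2 * φ x) =
      φ x * (β - ℏ * lam + ℏ ^ 2 / (4 * m) * (Real.pi / L) ^ 2) + g * φ x ^ 3 := by
    linear_combination -hode
  refine pos_of_mul_pos_right (a := ℏ ^ 2 / (4 * m)) ?_ hc.le
  rw [key]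
  positivity

lemma IsGPSolution.nonpos {ℏ m lam L g β : ℝ} {φ : ℝ → ℝ} (hℏ : ℏ ≠ 0) (hm : 0 < m)
    (hL : 0 < L) (hg : 0 < g) (hβ : betaCrit ℏ m lam L 1 ≤ β)
    (hsol : IsGPSolution ℏ m lam g 0 L β φ) (hC1 : ContDiffOn ℝ 1 φ (Icc 0 L)) :
    ∀ x ∈ Icc 0 L, φ x ≤ 0 := by
  intro x₀ hx₀
  by_contra! hpos
  obtain ⟨α, γ, h0α, hαγ, hγL, hα, hγ, hφpos⟩ :=
    exists_nodal_interval hsol.1 hsol.2.2.2.1 hsol.2.2.2.2 hx₀ hpos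
  have hsub : Icc α γ ⊆ Icc 0 L := Icc_subset_Icc h0α hγL
  have hsub' : Ioo α γ ⊆ Ioo 0 L := Ioo_subset_Ioo h0α hγL
  have hφ0 : ∀ x ∈ Icc α γ, 0 ≤ φ x := fun x hx => by
    rcases hx.1.eq_or_lt with rfl | h1
    · exact hα.ge
    rcases hx.2.eq_or_lt with rfl | h2
    · exact hγ.ge
    exact (hφpos x ⟨h1, h2⟩).le
  set k := Real.pi / L with hk
  -- `derivWithin`, not `deriv`: `φ` is only differentiable within `[0, L]` at `α = 0` or `γ = L`.
  obtain ⟨x, hx, hle⟩ := exists_wronskian_deriv_nonpos (u' := derivWithin φ (Icc 0 L))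
    (u'' := deriv (deriv φ))
    (v'' := fun x => -(k ^ 2 * Real.sin (k * x))) hαγ
    (fun x hx => (hC1.differentiableOn one_ne_zero x (hsub hx)).hasDerivWithinAt.mono hsub)
    (fun x hx => hasDerivAt_derivWithin_Icc hsol.2.1 (hsub' hx))
    ((hC1.continuousOn_derivWithin (uniqueDiffOn_Icc hL) le_rfl).mono hsub)
    (fun x _ => (hasDerivAt_sin_mul k x).hasDerivWithinAt)
    (fun x _ => hasDerivAt_mul_cos_mul k x) (by fun_prop : Continuous _).continuousOn
    hα hγ hφ0 (sin_pi_div_mul_nonneg hL (hsub (left_mem_Icc.2 hαγ.le)))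
    (sin_pi_div_mul_nonneg hL (hsub (right_mem_Icc.2 hαγ.le)))
  have hpos := mul_pos (hsol.deriv_deriv_add_pos hℏ hm hg hβ (hsub' hx) (hφpos x hx))
    (sin_pi_div_mul_pos (hsub' hx))
  rw [← hk] at hpos
  linarith

/-- for `g > 0` and `β ≥ β₁`, the only GP solution on `[0,L]` is the
identically zero function. -/
theorem stmt_6 (ℏ m lam L g : ℝ) (hℏ : 0 < ℏ) (hm : 0 < m) (hL : 0 < L)
    (hg : 0 < g) (β : ℝ) (hβ : betaCrit ℏ m lam L 1 ≤ β)
    (φ : ℝ → ℝ)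
    (hsol : IsGPSolution ℏ m lam g 0 L β φ)
    (hC1 : ContDiffOn ℝ 1 φ (Set.Icc 0 L)) :
    ∀ x ∈ Set.Icc (0:ℝ) L, φ x = 0 := by
  intro x hx
  exact le_antisymm (hsol.nonpos hℏ.ne' hm hL hg hβ hC1 x hx)
    (neg_nonpos.1 (hsol.neg.nonpos hℏ.ne' hm hL hg hβ hC1.neg x hx))
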